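/- arXiv:2011.14993 — 6 statements merged into one kernel-verified Lean document; each statement's English description precedes it below -/
import Mathlib

section
/- For every natural number n ≥ 3, the broadcast domination number of the cycle graph C_n equals ⌈n/3⌉. -/
open SimpleGraph Finset

/-- A dominating broadcast on `G`: every vertex is within distance `f u` of some
vertex `u` with `f u ≥ 1` (distances are measured by the graph metric `G.dist`). -/
def IsDominatingBroadcast {V : Type*} (G : SimpleGraph V) (f : V → ℕ) : Prop :=
  ∀ v : V, ∃ u : V, 1 ≤ f u ∧ G.dist u v ≤ f u

/-- The broadcast domination number of `G`: the minimum cost (sum of strengths)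
of a dominating broadcast on `G`. -/
noncomputable def gammaB (V : Type*) [Fintype V] (G : SimpleGraph V) : ℕ :=
  sInf {c : ℕ | ∃ f : V → ℕ, IsDominatingBroadcast G f ∧ ∑ v, f v = c}


/-!
A vertex broadcasting with strength `k ≥ 1` on `C_n` reaches at most `2k + 1 ≤ 3k` vertices, so
every dominating broadcast costs at least `n / 3`. Conversely, strength `1` on the vertices
`0, 3, 6, …` dominates `C_n`, and there are `⌈n / 3⌉` of them.
-/

section Broadcast

variable {V : Type*} [Fintype V] {G : SimpleGraph V}

theorem gammaB_le {f : V → ℕ} (hf : IsDominatingBroadcast G f) : gammaB V G ≤ ∑ v, f v :=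
  Nat.sInf_le ⟨f, hf, rfl⟩

theorem le_gammaB {c : ℕ} (hG : ∃ f, IsDominatingBroadcast G f)
    (h : ∀ f, IsDominatingBroadcast G f → c ≤ ∑ v, f v) : c ≤ gammaB V G := by
  obtain ⟨f, hf⟩ := hG
  exact le_csInf ⟨_, f, hf, rfl⟩ fun _ ⟨g, hg, hgc⟩ ↦ hgc ▸ h g hg

theorem IsDominatingBroadcast.card_le_mul_sum {f : V → ℕ} (hf : IsDominatingBroadcast G f)
    {c : ℕ} (hball : ∀ u k, 1 ≤ k → #{v | G.dist u v ≤ k} ≤ c * k) :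
    Fintype.card V ≤ c * ∑ v, f v := by
  classical
  set S : Finset V := {u | 1 ≤ f u}
  have hcover : (univ : Finset V) ⊆ S.biUnion fun u ↦ {v | G.dist u v ≤ f u} := by
    intro v _
    obtain ⟨u, hu, huv⟩ := hf v
    simp only [S, mem_biUnion, mem_filter, mem_univ, true_and]
    exact ⟨u, hu, huv⟩
  calc Fintype.card V ≤ #(S.biUnion fun u ↦ {v | G.dist u v ≤ f u}) := card_le_card hcover
    _ ≤ ∑ u ∈ S, #{v | G.dist u v ≤ f u} := card_biUnion_le
    _ ≤ ∑ u ∈ S, c * f u := sum_le_sum fun u hu ↦ hball u (f u) (mem_filter.mp hu).2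
    _ ≤ ∑ u, c * f u := sum_le_sum_of_subset (subset_univ S)
    _ = c * ∑ v, f v := (mul_sum ..).symm

end Broadcast

namespace SimpleGraph

section Circulant

variable {A : Type*} [AddGroup A] {g : A}

theorem Walk.exists_zsmul_add_of_circulantGraph_singleton {u v : A}
    (p : (circulantGraph {g}).Walk u v) : ∃ z : ℤ, |z| ≤ p.length ∧ v = z • g + u := by
  induction p with
  | nil => exact ⟨0, by simp⟩
  | @cons a b c hab p ih =>
    obtain ⟨z, hz, rfl⟩ := ih
    rw [Walk.length_cons, Nat.cast_add_one]
    rw [circulantGraph_adj, Set.mem_singleton_iff, Set.mem_singleton_iff] at hab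
    rcases hab with ⟨-, hba | hab⟩
    · refine ⟨z - 1, by rw [abs_le] at hz ⊢; constructor <;> linarith, ?_⟩
      rw [sub_eq_iff_eq_add] at hba
      rw [hba, sub_zsmul, one_zsmul, add_assoc, neg_add_cancel_left]
    · refine ⟨z + 1, by rw [abs_le] at hz ⊢; constructor <;> linarith, ?_⟩
      rw [sub_eq_iff_eq_add] at hab
      rw [hab, add_zsmul, one_zsmul, add_assoc]

theorem card_filter_circulantGraph_singleton_dist_le [Fintype A]
    (hconn : (circulantGraph {g}).Preconnected) (u : A) (k : ℕ) :
    #{v | (circulantGraph {g}).dist u v ≤ k} ≤ 2 * k + 1 := by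
  classical
  have hsub : ({v | (circulantGraph {g}).dist u v ≤ k} : Finset A) ⊆
      (Icc (-k : ℤ) k).image fun z ↦ z • g + u := by
    intro v hv
    obtain ⟨p, hp⟩ := (hconn u v).exists_walk_length_eq_dist
    obtain ⟨z, hz, rfl⟩ := p.exists_zsmul_add_of_circulantGraph_singleton
    have hzk : |z| ≤ k := hz.trans (by rw [hp]; exact_mod_cast (mem_filter.mp hv).2)
    exact mem_image_of_mem _ (mem_Icc.mpr (abs_le.mp hzk))
  calc #{v | (circulantGraph {g}).dist u v ≤ k}
      ≤ #((Icc (-k : ℤ) k).image fun z ↦ z • g + u) := card_le_card hsub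
    _ ≤ #(Icc (-k : ℤ) k) := card_image_le
    _ = 2 * k + 1 := by rw [Int.card_Icc]; omega

end Circulant

theorem card_filter_cycleGraph_dist_le {n : ℕ} (u : Fin n) (k : ℕ) :
    #{v | (cycleGraph n).dist u v ≤ k} ≤ 2 * k + 1 := by
  cases n with
  | zero => exact u.elim0
  | succ n =>
    rw [cycleGraph_eq_circulantGraph]
    exact card_filter_circulantGraph_singleton_dist_le
      (cycleGraph_eq_circulantGraph n ▸ cycleGraph_preconnected) u k

theorem cycleGraph_dist_add_one_le {n : ℕ} (u : Fin (n + 1)) :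
    (cycleGraph (n + 1)).dist u (u + 1) ≤ 1 := by
  by_cases h : u = u + 1
  · rw [← h, dist_self]
    exact zero_le_one
  · rw [cycleGraph_eq_circulantGraph]
    have hadj : (circulantGraph {(1 : Fin (n + 1))}).Adj u (u + 1) := by
      rw [circulantGraph_adj]
      exact ⟨h, Or.inr (add_sub_cancel_left u 1)⟩
    exact (dist_eq_one_iff_adj.mpr hadj).le

theorem cycleGraph_exists_three_dvd_dist_le_one {n : ℕ} (v : Fin (n + 1)) :
    ∃ u : Fin (n + 1), 3 ∣ u.val ∧ (cycleGraph (n + 1)).dist u v ≤ 1 := by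
  rcases (by omega : v.val % 3 = 0 ∨ v.val % 3 = 1 ∨ v.val % 3 = 2) with h | h | h
  · exact ⟨v, Nat.dvd_of_mod_eq_zero h, by simp⟩
  · refine ⟨v - 1, ?_, ?_⟩
    · have hv : v ≠ 0 := by rintro rfl; simp at h
      rw [Fin.coe_sub_one, if_neg hv]
      omega
    · have hdist := cycleGraph_dist_add_one_le (v - 1)
      rwa [sub_add_cancel] at hdist
  · refine ⟨v + 1, ?_, by rw [SimpleGraph.dist_comm]; exact cycleGraph_dist_add_one_le v⟩
    rw [Fin.val_add_one]
    split_ifs <;> omega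

end SimpleGraph

theorem IsDominatingBroadcast.le_three_mul_sum_cycleGraph {n : ℕ} {f : Fin n → ℕ}
    (hf : IsDominatingBroadcast (cycleGraph n) f) : n ≤ 3 * ∑ v, f v := by
  simpa using hf.card_le_mul_sum fun u k hk ↦ (card_filter_cycleGraph_dist_le u k).trans (by omega)

def everyThirdBroadcast (n : ℕ) (v : Fin n) : ℕ := if 3 ∣ v.val then 1 else 0

theorem sum_everyThirdBroadcast (n : ℕ) : ∑ v, everyThirdBroadcast n v = ⌈(n : ℚ) / 3⌉₊ := by
  have hcount := Nat.count_modEq_card_eq_ceil n three_pos 0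
  rw [Nat.zero_mod, Nat.cast_zero, sub_zero, ← Int.natCast_ceil_eq_ceil (by positivity)] at hcount
  simp only [Nat.modEq_zero_iff_dvd, Nat.count_eq_card_filter_range] at hcount
  simp only [everyThirdBroadcast]
  rw [Fin.sum_univ_eq_sum_range (fun i ↦ if 3 ∣ i then 1 else 0), sum_boole]
  exact_mod_cast hcount

theorem isDominatingBroadcast_everyThirdBroadcast (n : ℕ) :
    IsDominatingBroadcast (cycleGraph n) (everyThirdBroadcast n) := by
  cases n with
  | zero => exact fun v ↦ v.elim0
  | succ n =>
    intro v
    obtain ⟨u, hu, huv⟩ := cycleGraph_exists_three_dvd_dist_le_one v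
    exact ⟨u, by simp [everyThirdBroadcast, hu], by simpa [everyThirdBroadcast, hu] using huv⟩

theorem gammaB_cycleGraph_general (n : ℕ) :
    gammaB (Fin n) (SimpleGraph.cycleGraph n) = ⌈(n : ℚ) / 3⌉₊ := by
  have hf := isDominatingBroadcast_everyThirdBroadcast n
  refine le_antisymm (sum_everyThirdBroadcast n ▸ gammaB_le hf) (le_gammaB ⟨_, hf⟩ fun f hf ↦ ?_)
  rw [Nat.ceil_le, div_le_iff₀ (by norm_num), mul_comm]
  exact_mod_cast hf.le_three_mul_sum_cycleGraph

/-- For every natural number `n ≥ 3`, the broadcast domination number of the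
cycle graph `C_n` equals `⌈n/3⌉`. -/
theorem gammaB_cycleGraph (n : ℕ) (hn : 3 ≤ n) :
    gammaB (Fin n) (SimpleGraph.cycleGraph n) = ⌈(n : ℚ) / 3⌉₊ :=
  gammaB_cycleGraph_general n
end

section
/- For every natural number n ≥ 3, every efficient dominating broadcast on the sunlet graph S_n whose cost equals the broadcast domination number γ_b(S_n) has exactly one broadcast vertex, i.e., exactly one vertex v with f(v) ≥ 1. -/
open SimpleGraph Finset

/-- An efficient broadcast: every vertex receives a signal from exactly one
broadcast vertex. -/
def IsEfficientBroadcast {V : Type*} (G : SimpleGraph V) (f : V → ℕ) : Prop :=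
  ∀ v : V, ∃! u : V, 1 ≤ f u ∧ G.dist u v ≤ f u

/-- The sunlet graph `S_n`: the cycle `C_n` together with one pendant vertex
attached to each cycle vertex.  The vertex `(i, false)` is the `i`-th cycle
vertex and `(i, true)` is the pendant vertex attached to it. -/
def sunlet (n : ℕ) : SimpleGraph (Fin n × Bool) :=
  SimpleGraph.fromRel (fun a b =>
    (a.2 = false ∧ b.2 = false ∧ (SimpleGraph.cycleGraph n).Adj a.1 b.1) ∨
    (a.1 = b.1 ∧ a.2 = false ∧ b.2 = true))

def Dn (n a b : ℕ) : ℕ := min (max a b - min a b) (n - (max a b - min a b))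

theorem Dn_realize (n a t : ℕ) (ha : a < n) (ht : t ≤ n / 2) : Dn n a ((a + t) % n) = t := by
  rcases Nat.lt_or_ge (a + t) n with h | h
  · rw [Nat.mod_eq_of_lt h]; unfold Dn; omega
  · have h3 : (a + t) % n = a + t - n := by
      conv_lhs => rw [show a + t = (a + t - n) + n by omega]
      rw [Nat.add_mod_right, Nat.mod_eq_of_lt (by omega)]
    rw [h3]; unfold Dn; omega

theorem Dn_step (n a b : ℕ) (ha : a < n) (hb : b < n) (h : ((n - b) + a) % n = 1) :
    Dn n a b ≤ 1 := by
  rcases Nat.lt_or_ge ((n - b) + a) n with h2 | h2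
  · rw [Nat.mod_eq_of_lt h2] at h; unfold Dn; omega
  · have h3 : ((n - b) + a) % n = (n - b) + a - n := by
      conv_lhs => rw [show (n - b) + a = ((n - b) + a - n) + n by omega]
      rw [Nat.add_mod_right, Nat.mod_eq_of_lt (by omega)]
    rw [h3] at h; unfold Dn; omega

theorem Dn_tri (n a b c : ℕ) (ha : a < n) (hb : b < n) (hc : c < n) :
    Dn n a c ≤ Dn n a b + Dn n b c := by unfold Dn; omega

theorem Dn_self (n a : ℕ) : Dn n a a = 0 := by unfold Dn; omega

theorem Dn_pos (n a b : ℕ) (ha : a < n) (hb : b < n) (hne : a ≠ b) : 1 ≤ Dn n a b := by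
  unfold Dn; omega


theorem nat_mod_succ_ne (n i : ℕ) (hn : 3 ≤ n) (hi : i < n) : (i + 1) % n ≠ i := by
  rcases Nat.lt_or_ge (i + 1) n with h | h
  · rw [Nat.mod_eq_of_lt h]; omega
  · have hi1 : i + 1 = n := by omega
    rw [hi1, Nat.mod_self]; omega

theorem nat_cyc_succ (n i : ℕ) (hn : 3 ≤ n) (hi : i < n) :
    (n - i + ((i + 1) % n)) % n = 1 := by
  rcases Nat.lt_or_ge (i + 1) n with h | h
  · rw [Nat.mod_eq_of_lt h, show n - i + (i + 1) = 1 + n by omega, Nat.add_mod_right,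
      Nat.mod_eq_of_lt (by omega)]
  · have hi1 : i + 1 = n := by omega
    rw [show (i + 1) % n = 0 from by rw [hi1, Nat.mod_self], show n - i + 0 = 1 by omega,
      Nat.mod_eq_of_lt (by omega)]


-- pendant edge
theorem sunlet_adj_pendant {n : ℕ} (i : Fin n) :
    (sunlet n).Adj (i, false) (i, true) := by
  rw [sunlet, fromRel_adj]
  exact ⟨by simp, Or.inl (Or.inr ⟨rfl, rfl, rfl⟩)⟩

-- neighbors of a pendant vertex
theorem sunlet_pendant_nbr {n : ℕ} {i : Fin n} {x : Fin n × Bool}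
    (h : (sunlet n).Adj (i, true) x) : x = (i, false) := by
  rw [sunlet, fromRel_adj] at h
  obtain ⟨-, h | h⟩ := h
  · rcases h with ⟨h, -⟩ | ⟨-, h, -⟩ <;> simp at h
  · rcases h with ⟨-, h, -⟩ | ⟨h1, h2, -⟩
    · simp at h
    · exact Prod.ext h1 h2

-- cycle edge
theorem sunlet_adj_cycle {n : ℕ} (hn : 3 ≤ n) (i j : Fin n)
    (hj : j.val = (i.val + 1) % n) : (sunlet n).Adj (i, false) (j, false) := by
  have hij : i ≠ j := by
    intro h; rw [← h] at hj; exact nat_mod_succ_ne n i.val hn i.isLt hj.symm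
  rw [sunlet, fromRel_adj]
  refine ⟨by simp [hij], Or.inl (Or.inl ⟨rfl, rfl, ?_⟩)⟩
  rw [SimpleGraph.cycleGraph_adj']
  right
  rw [Fin.sub_def]
  simp only [hj]
  exact nat_cyc_succ n i.val hn i.isLt

theorem sunlet_walk_cycle {n : ℕ} (hn : 3 ≤ n) (i : Fin n) (s : ℕ) :
    ∀ j : Fin n, j.val = (i.val + s) % n →
      ∃ W : (sunlet n).Walk (i, false) (j, false), W.length = s := by
  induction s with
  | zero =>
    intro j hj
    have : j = i := by
      apply Fin.ext; have := i.isLt; rw [hj, Nat.add_zero, Nat.mod_eq_of_lt (by omega)]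
    subst this
    exact ⟨SimpleGraph.Walk.nil, rfl⟩
  | succ s ih =>
    intro j hj
    set j' : Fin n := ⟨(i.val + s) % n, Nat.mod_lt _ (by omega)⟩ with hj'
    obtain ⟨W, hW⟩ := ih j' rfl
    have hadj : (sunlet n).Adj (j', false) (j, false) := by
      apply sunlet_adj_cycle hn
      rw [hj, hj']
      show (↑i + (s + 1)) % n = ((↑i + s) % n + 1) % n
      rw [Nat.mod_add_mod, Nat.add_assoc]
    exact ⟨W.concat hadj, by rw [SimpleGraph.Walk.length_concat, hW]⟩

theorem sunlet_dist_cycle_le {n : ℕ} (hn : 3 ≤ n) (i j : Fin n) (s : ℕ)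
    (hj : j.val = (i.val + s) % n) :
    (sunlet n).dist (i, false) (j, false) ≤ s := by
  obtain ⟨W, hW⟩ := sunlet_walk_cycle hn i s j hj
  exact hW ▸ SimpleGraph.dist_le W

theorem sunlet_connected {n : ℕ} (hn : 3 ≤ n) : (sunlet n).Connected := by
  rw [SimpleGraph.connected_iff]
  constructor
  · intro u v
    have key : ∀ a b : Fin n, (sunlet n).Reachable (a, false) (b, false) := by
      intro a b
      obtain ⟨W, -⟩ := sunlet_walk_cycle hn a (b.val + n - a.val) b
        (by have ha := a.isLt; have hb := b.isLt
            rw [show a.val + (b.val + n - a.val) = b.val + n by omega,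
             Nat.add_mod_right, Nat.mod_eq_of_lt hb])
      exact ⟨W⟩
    have pend : ∀ a : Fin n, (sunlet n).Reachable (a, false) (a, true) :=
      fun a => (sunlet_adj_pendant a).reachable
    obtain ⟨u1, bu⟩ := u; obtain ⟨v1, bv⟩ := v
    cases bu <;> cases bv
    · exact key u1 v1
    · exact (key u1 v1).trans (pend v1)
    · exact (pend u1).symm.trans (key u1 v1)
    · exact ((pend u1).symm.trans (key u1 v1)).trans (pend v1)
  · exact ⟨((0 : Fin 3).castLE hn, false)⟩

theorem sunlet_adj_Dn {n : ℕ} {x y : Fin n × Bool} (h : (sunlet n).Adj x y) :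
    Dn n x.1.val y.1.val ≤ 1 := by
  rw [sunlet, fromRel_adj] at h
  obtain ⟨-, h⟩ := h
  have key : ∀ a b : Fin n × Bool,
      ((a.2 = false ∧ b.2 = false ∧ (SimpleGraph.cycleGraph n).Adj a.1 b.1) ∨
       (a.1 = b.1 ∧ a.2 = false ∧ b.2 = true)) → Dn n a.1.val b.1.val ≤ 1 := by
    intro a b hab
    rcases hab with ⟨-, -, hadj⟩ | ⟨h1, -, -⟩
    · rw [SimpleGraph.cycleGraph_adj'] at hadj
      rcases hadj with h1 | h1 <;> rw [Fin.sub_def] at h1 <;> simp only [Fin.mk.injEq] at h1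
      · have := Dn_step n a.1.val b.1.val a.1.isLt b.1.isLt h1
        unfold Dn at this ⊢; omega
      · have := Dn_step n b.1.val a.1.val b.1.isLt a.1.isLt h1
        unfold Dn at this ⊢; omega
    · rw [h1, Dn_self]; omega
  rcases h with h | h
  · exact key _ _ h
  · have := key _ _ h
    unfold Dn at this ⊢; omega

theorem sunlet_walk_Dn {n : ℕ} {x y : Fin n × Bool} (W : (sunlet n).Walk x y) :
    Dn n x.1.val y.1.val ≤ W.length := by
  induction W with
  | nil => simp [Dn_self]
  | @cons u v w h W ih =>
    have h1 := sunlet_adj_Dn h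
    have := Dn_tri n u.1.val v.1.val w.1.val u.1.isLt v.1.isLt w.1.isLt
    rw [SimpleGraph.Walk.length_cons]
    omega

theorem sunlet_dist_Dn {n : ℕ} (hn : 3 ≤ n) (x y : Fin n × Bool) :
    Dn n x.1.val y.1.val ≤ (sunlet n).dist x y := by
  obtain ⟨W, hW⟩ := ((sunlet_connected hn) x y).exists_walk_length_eq_dist
  exact hW ▸ sunlet_walk_Dn W

theorem sunlet_dist_pendant_lower {n : ℕ} (hn : 3 ≤ n) (j : Fin n) (v : Fin n × Bool)
    (hv : v ≠ (j, true)) :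
    (sunlet n).dist (j, false) v + 1 ≤ (sunlet n).dist (j, true) v := by
  obtain ⟨W, hW⟩ := ((sunlet_connected hn) (j, true) v).exists_walk_length_eq_dist
  cases W with
  | nil => exact absurd rfl hv
  | @cons _ x _ h W' =>
    have hx := sunlet_pendant_nbr h
    subst hx
    have := SimpleGraph.dist_le W'
    rw [SimpleGraph.Walk.length_cons] at hW
    omega

theorem sunlet_dist_pendant_upper {n : ℕ} (hn : 3 ≤ n) (j : Fin n) (v : Fin n × Bool) :
    (sunlet n).dist (j, true) v ≤ (sunlet n).dist (j, false) v + 1 := by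
  have htri := (sunlet_connected hn).dist_triangle (u := ((j, true) : Fin n × Bool))
    (v := ((j, false) : Fin n × Bool)) (w := v)
  have h1 : (sunlet n).dist (j, true) (j, false) ≤ 1 := by
    have := SimpleGraph.dist_le ((sunlet_adj_pendant j).symm.toWalk)
    simpa using this
  omega


theorem sunlet_dist_c0_le {n : ℕ} (hn : 3 ≤ n) (v : Fin n × Bool) :
    (sunlet n).dist (⟨0, by omega⟩, false) v ≤ n / 2 + 1 := by
  obtain ⟨j, b⟩ := v
  have hj := j.isLt
  have fwd : (sunlet n).dist (⟨0, by omega⟩, false) (j, false) ≤ j.val :=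
    sunlet_dist_cycle_le hn _ _ j.val (by simp [Nat.mod_eq_of_lt hj])
  have bwd : (sunlet n).dist (⟨0, by omega⟩, false) (j, false) ≤ n - j.val := by
    rw [SimpleGraph.dist_comm]
    exact sunlet_dist_cycle_le hn j ⟨0, by omega⟩ (n - j.val)
      (by simp [show j.val + (n - j.val) = n by omega, Nat.mod_self])
  have hcyc : (sunlet n).dist (⟨0, by omega⟩, false) (j, false) ≤ n / 2 := by omega
  cases b
  · omega
  · have := sunlet_dist_pendant_upper hn j (⟨0, by omega⟩, false)
    rw [SimpleGraph.dist_comm (u := ((j,true) : Fin n × Bool))] at this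
    rw [SimpleGraph.dist_comm (u := ((j,false) : Fin n × Bool))] at this
    omega

theorem gammaB_le_s5 {n : ℕ} (hn : 3 ≤ n) : gammaB (Fin n × Bool) (sunlet n) ≤ n / 2 + 1 := by
  apply Nat.sInf_le
  refine ⟨fun v => if v = ((⟨0, by omega⟩ : Fin n), false) then n / 2 + 1 else 0, ?_, ?_⟩
  · intro v
    refine ⟨((⟨0, by omega⟩ : Fin n), false), ?_, ?_⟩
    · simp
    · simp only [if_pos rfl]
      exact sunlet_dist_c0_le hn v
  · rw [Finset.sum_ite_eq' Finset.univ ((⟨0, by omega⟩ : Fin n), false) (fun _ => n / 2 + 1)]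
    simp

-- Key lemma: in an efficient broadcast, a broadcaster covering a cycle vertex
-- must also cover its pendant.
theorem cover_pendant {n : ℕ} (hn : 3 ≤ n) (f : Fin n × Bool → ℕ)
    (heff : ∀ v, ∃! u, 1 ≤ f u ∧ (sunlet n).dist u v ≤ f u)
    (u : Fin n × Bool) (j : Fin n) (hu1 : 1 ≤ f u)
    (hcov : (sunlet n).dist u (j, false) ≤ f u) :
    (sunlet n).dist u (j, true) ≤ f u := by
  by_contra hne
  obtain ⟨w, hw, -⟩ := heff (j, true)
  have hwu : w ≠ u := by
    intro h; rw [h] at hw; exact hne hw.2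
  have hwc : (sunlet n).dist w (j, false) ≤ f w := by
    by_cases hwp : w = (j, true)
    · subst hwp
      have h1 := SimpleGraph.dist_le ((sunlet_adj_pendant j).symm.toWalk)
      have := hw.1
      simp only [SimpleGraph.Walk.length_cons, SimpleGraph.Walk.length_nil] at h1
      omega
    · have hlow := sunlet_dist_pendant_lower hn j w hwp
      rw [SimpleGraph.dist_comm (u := ((j, false) : Fin n × Bool)),
        SimpleGraph.dist_comm (u := ((j, true) : Fin n × Bool))] at hlow
      have := hw.2
      omega
  obtain ⟨z, -, hz⟩ := heff (j, false)
  have h1 := hz u ⟨hu1, hcov⟩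
  have h2 := hz w ⟨hw.1, hwc⟩
  exact hwu (h2.trans h1.symm)

-- No cycle broadcaster can have small strength.
theorem cycle_broadcaster_big {n : ℕ} (hn : 3 ≤ n) (f : Fin n × Bool → ℕ)
    (heff : ∀ v, ∃! u, 1 ≤ f u ∧ (sunlet n).dist u v ≤ f u)
    (i : Fin n) (h1 : 1 ≤ f (i, false)) (hle : f (i, false) ≤ n / 2) : False := by
  set t := f (i, false) with ht
  set j : Fin n := ⟨(i.val + t) % n, Nat.mod_lt _ (by omega)⟩ with hj
  have hcov : (sunlet n).dist (i, false) (j, false) ≤ t :=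
    sunlet_dist_cycle_le hn i j t rfl
  have hp := cover_pendant hn f heff (i, false) j h1 hcov
  have hlow := sunlet_dist_pendant_lower hn j ((i, false) : Fin n × Bool) (by simp)
  rw [SimpleGraph.dist_comm (u := ((j, false) : Fin n × Bool)),
    SimpleGraph.dist_comm (u := ((j, true) : Fin n × Bool))] at hlow
  have hDn : Dn n i.val j.val ≤ (sunlet n).dist ((i, false) : Fin n × Bool) ((j, false) : Fin n × Bool) :=
    sunlet_dist_Dn hn ((i, false) : Fin n × Bool) ((j, false) : Fin n × Bool)
  have hreal : Dn n i.val j.val = t := Dn_realize n i.val t i.isLt hle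
  have hjv : j.val = (i.val + t) % n := rfl
  omega

-- pendant broadcasters have strength exactly 1
theorem pendant_broadcaster_one {n : ℕ} (hn : 3 ≤ n) (f : Fin n × Bool → ℕ)
    (heff : ∀ v, ∃! u, 1 ≤ f u ∧ (sunlet n).dist u v ≤ f u)
    (i : Fin n) (h2 : 2 ≤ f (i, true)) (hle : f (i, true) ≤ n / 2 + 1) : False := by
  set t := f (i, true) with ht
  set s : ℕ := min (t - 1) (n / 2) with hs
  have hs1 : 1 ≤ s := by omega
  set j : Fin n := ⟨(i.val + s) % n, Nat.mod_lt _ (by omega)⟩ with hj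
  have hreal : Dn n i.val j.val = s := Dn_realize n i.val s i.isLt (by omega)
  have hji : j ≠ i := by
    intro h; rw [h, Dn_self] at hreal; omega
  have hcov : (sunlet n).dist (i, true) (j, false) ≤ t := by
    have h1 := sunlet_dist_pendant_upper hn i ((j, false) : Fin n × Bool)
    have h2 := sunlet_dist_cycle_le hn i j s rfl
    omega
  have hp := cover_pendant hn f heff (i, true) j (by omega) hcov
  have hl1 := sunlet_dist_pendant_lower hn i ((j, true) : Fin n × Bool)
    (by intro h; exact hji (congrArg Prod.fst h))
  have hl2 := sunlet_dist_pendant_lower hn j ((i, false) : Fin n × Bool) (by simp)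
  rw [SimpleGraph.dist_comm (u := ((j, false) : Fin n × Bool)),
    SimpleGraph.dist_comm (u := ((j, true) : Fin n × Bool))] at hl2
  have hDn : Dn n i.val j.val ≤ (sunlet n).dist ((i, false) : Fin n × Bool) ((j, false) : Fin n × Bool) :=
    sunlet_dist_Dn hn ((i, false) : Fin n × Bool) ((j, false) : Fin n × Bool)
  have hjv : j.val = (i.val + s) % n := rfl
  omega


/-- For every `n ≥ 3`, an efficient dominating broadcast on the sunlet graph
`S_n` whose cost equals `γ_b(S_n)` has exactly one broadcast vertex. -/
theorem sunlet_efficient_min_broadcast_unique_vertex (n : ℕ) (hn : 3 ≤ n)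
    (f : Fin n × Bool → ℕ)
    (hdom : IsDominatingBroadcast (sunlet n) f)
    (heff : IsEfficientBroadcast (sunlet n) f)
    (hcost : ∑ v, f v = gammaB (Fin n × Bool) (sunlet n)) :
    ∃! v : Fin n × Bool, 1 ≤ f v := by
  have heff' : ∀ v, ∃! u, 1 ≤ f u ∧ (sunlet n).dist u v ≤ f u := heff
  have hC : ∑ v, f v ≤ n / 2 + 1 := by
    rw [hcost]; exact gammaB_le_s5 hn
  obtain ⟨u0, hu0, -⟩ := heff ((⟨0, by omega⟩ : Fin n), false)
  refine ⟨u0, hu0.1, ?_⟩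
  intro y hy
  by_contra hne
  -- two distinct broadcasters y and u0
  have hpair : ∀ a b : Fin n × Bool, a ≠ b → 1 ≤ f a → 1 ≤ f b → f a + f b ≤ ∑ v, f v := by
    intro a b hab _ _
    have hsub : ({a, b} : Finset (Fin n × Bool)).sum f ≤ ∑ v, f v :=
      Finset.sum_le_sum_of_subset (Finset.subset_univ _)
    rwa [Finset.sum_pair hab] at hsub
  -- every broadcaster has strength ≤ n/2
  have hsmall : ∀ a : Fin n × Bool, 1 ≤ f a → f a ≤ n / 2 := by
    intro a ha
    rcases eq_or_ne a y with rfl | hay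
    · have := hpair a u0 hne ha hu0.1
      have := hu0.1
      omega
    · have := hpair a y hay ha hy
      have := hy
      omega
  -- hence every broadcaster is a pendant vertex with strength 1
  have hbp : ∀ a : Fin n × Bool, 1 ≤ f a → a.2 = true ∧ f a = 1 := by
    rintro ⟨l, b⟩ ha
    cases b
    · exact (cycle_broadcaster_big hn f heff' l ha (hsmall _ ha)).elim
    · refine ⟨rfl, ?_⟩
      by_contra h2
      exact pendant_broadcaster_one hn f heff' l (by omega) (by have := hsmall _ ha; omega)
  -- every pendant is a broadcaster
  have hall : ∀ j : Fin n, 1 ≤ f (j, true) := by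
    intro j
    obtain ⟨u, hu, -⟩ := heff ((j, false) : Fin n × Bool)
    obtain ⟨hut, hu1⟩ := hbp u hu.1
    obtain ⟨l, b⟩ := u
    simp only at hut
    subst hut
    have hlj : l = j := by
      by_contra hljne
      have hlow := sunlet_dist_pendant_lower hn l ((j, false) : Fin n × Bool) (by simp)
      have hDn : Dn n l.val j.val ≤
          (sunlet n).dist ((l, false) : Fin n × Bool) ((j, false) : Fin n × Bool) :=
        sunlet_dist_Dn hn ((l, false) : Fin n × Bool) ((j, false) : Fin n × Bool)
      have hpos : 1 ≤ Dn n l.val j.val :=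
        Dn_pos n l.val j.val l.isLt j.isLt (fun h => hljne (Fin.ext h))
      have := hu.2
      omega
    subst hlj
    omega
  -- sum is at least n
  have hsum : n ≤ ∑ v, f v := by
    rw [Fintype.sum_prod_type]
    calc n = ∑ _j : Fin n, 1 := by simp
    _ ≤ ∑ j : Fin n, ∑ b : Bool, f (j, b) := by
        apply Finset.sum_le_sum
        intro j _
        rw [Fintype.sum_bool]
        have := hall j
        omega
  omega
end

section
/- For every natural number m ≥ 1, the broadcast domination number of the sunlet graph with degree m on the triangle, S_3^m, equals m + 1. -/
open SimpleGraph Finset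

/-- The sunlet graph with degree `n` on the cycle `C_m`, `S_m^n`: a path on `n`
new vertices (a branch) is attached to each vertex of the cycle `C_m`.
The vertex `(i, 0)` is the `i`-th base vertex (on the cycle) and, for
`1 ≤ j ≤ n`, the vertex `(i, j)` is the `j`-th pendant vertex of the branch
attached at `(i, 0)`. -/
def sunletDeg (m n : ℕ) : SimpleGraph (Fin m × Fin (n + 1)) :=
  SimpleGraph.fromRel (fun a b =>
    (a.2 = 0 ∧ b.2 = 0 ∧ (SimpleGraph.cycleGraph m).Adj a.1 b.1) ∨
    (a.1 = b.1 ∧ (a.2 : ℕ) + 1 = (b.2 : ℕ)))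

/-!
Broadcasting with strength `m + 1` from one base vertex dominates `S_3^m`. Conversely, a ball of
radius `r ≥ 1` in `S_3^m` has at most `3 r` vertices, or `3 r + 1` when centred at a base vertex,
in which case it contains all three base vertices. So every ball of radius `r` meets the `3 m + 1`
vertices other than two fixed base vertices in at most `3 r` of them, and covering those vertices
by balls costs at least `(3 m + 1) / 3 > m`.
-/

namespace SimpleGraph

variable {V : Type*} {G : SimpleGraph V}

theorem dist_eq_of_adj (D : V → V → ℕ) (hself : ∀ a, D a a = 0)
    (hadj : ∀ a c b, G.Adj a c → D a b ≤ D c b + 1)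
    (hstep : ∀ a b, a ≠ b → ∃ c, G.Adj a c ∧ D c b + 1 ≤ D a b) (a b : V) :
    G.dist a b = D a b := by
  have hwalk : ∀ a, ∃ w : G.Walk a b, w.length ≤ D a b := by
    intro a
    induction hn : D a b using Nat.strong_induction_on generalizing a with
    | _ n ih =>
      by_cases hab : a = b
      · subst hab; exact ⟨.nil, by simp⟩
      · obtain ⟨c, hac, hc⟩ := hstep a b hab
        obtain ⟨w, hw⟩ := ih _ (by omega) c rfl
        exact ⟨.cons hac w, by simp; omega⟩
  have hlength : ∀ {a b} (w : G.Walk a b), D a b ≤ w.length := by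
    intro a b w
    induction w with
    | nil => simp [hself]
    | cons h w ih => exact (hadj _ _ _ h).trans (by simpa using ih)
  obtain ⟨w, hw⟩ := hwalk a
  obtain ⟨p, hp⟩ := Reachable.exists_walk_length_eq_dist ⟨w⟩
  exact le_antisymm ((dist_le w).trans hw) (hp ▸ hlength p)

end SimpleGraph

section Broadcast

variable {V : Type*} {G : SimpleGraph V}

theorem isDominatingBroadcast_single [DecidableEq V] {u : V} {e : ℕ} (he : 1 ≤ e)
    (h : ∀ v, G.dist u v ≤ e) : IsDominatingBroadcast G (Pi.single u e) :=
  fun v => ⟨u, by simpa using he, by simpa using h v⟩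

theorem IsDominatingBroadcast.card_le_sum [Fintype V] [DecidableEq V] {f : V → ℕ}
    (hf : IsDominatingBroadcast G f) (T : Finset V) :
    #T ≤ ∑ u with 1 ≤ f u, #{v ∈ T | G.dist u v ≤ f u} := by
  refine (card_le_card fun v hv => ?_).trans card_biUnion_le
  obtain ⟨u, hu, huv⟩ := hf v
  exact mem_biUnion.2 ⟨u, by simpa using hu, mem_filter.2 ⟨hv, huv⟩⟩

theorem gammaB_eq [Fintype V] {c : ℕ} {f₀ : V → ℕ} (hf₀ : IsDominatingBroadcast G f₀)
    (hcost : ∑ v, f₀ v = c) (hle : ∀ f, IsDominatingBroadcast G f → c ≤ ∑ v, f v) :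
    gammaB V G = c :=
  IsLeast.csInf_eq ⟨⟨f₀, hf₀, hcost⟩, by rintro _ ⟨f, hf, rfl⟩; exact hle f hf⟩

end Broadcast

section Sunlet

variable {m : ℕ}

-- Between two branches a shortest path runs through their two (adjacent) base vertices.
def sunletThreeDist (a b : Fin 3 × Fin (m + 1)) : ℕ :=
  if a.1 = b.1 then Nat.dist a.2 b.2 else a.2 + b.2 + 1

theorem sunletDeg_three_adj {a b : Fin 3 × Fin (m + 1)} :
    (sunletDeg 3 m).Adj a b ↔
      (a.2 = 0 ∧ b.2 = 0 ∧ a.1 ≠ b.1) ∨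
        (a.1 = b.1 ∧ ((a.2 : ℕ) + 1 = b.2 ∨ (b.2 : ℕ) + 1 = a.2)) := by
  simp only [sunletDeg, fromRel_adj, cycleGraph_three_eq_top, top_adj, ne_eq, Prod.ext_iff,
    Fin.ext_iff, Fin.val_zero]
  omega

theorem sunletDeg_three_dist (a b : Fin 3 × Fin (m + 1)) :
    (sunletDeg 3 m).dist a b = sunletThreeDist a b := by
  refine dist_eq_of_adj sunletThreeDist (fun a => by simp [sunletThreeDist]) ?_ ?_ a b
  · intro a c b h
    grind [sunletDeg_three_adj, sunletThreeDist, Nat.dist]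
  · rintro ⟨i, x⟩ ⟨j, y⟩ hab
    have hne : (i : ℕ) = j → (x : ℕ) ≠ y := by simpa [Fin.ext_iff] using hab
    by_cases hup : (i : ℕ) = j ∧ (x : ℕ) < y
    · refine ⟨(i, ⟨x + 1, by omega⟩), sunletDeg_three_adj.2 ?_, ?_⟩ <;>
        grind [sunletThreeDist, Nat.dist]
    by_cases hx : (x : ℕ) = 0
    · refine ⟨(j, 0), sunletDeg_three_adj.2 ?_, ?_⟩ <;>
        grind [sunletThreeDist, Nat.dist]
    · refine ⟨(i, ⟨x - 1, by omega⟩), sunletDeg_three_adj.2 ?_, ?_⟩ <;>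
        grind [sunletThreeDist, Nat.dist]

theorem card_sunletThreeDist_ball_le (i : Fin 3) (x : Fin (m + 1)) {r : ℕ} (hr : 1 ≤ r) :
    #{v | sunletThreeDist (i, x) v ≤ r} ≤ 3 * r + if x = 0 then 1 else 0 := by
  have hown : #{y : Fin (m + 1) | sunletThreeDist (i, x) (i, y) ≤ r} ≤ #(Icc (x - r) (x + r)) :=
    card_le_card_of_injOn Fin.val (fun y hy => by simp_all [sunletThreeDist, Nat.dist]; omega)
      Fin.val_injective.injOn
  have hother : ∀ j ∈ ({i}ᶜ : Finset (Fin 3)),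
      #{y : Fin (m + 1) | sunletThreeDist (i, x) (j, y) ≤ r} ≤ #(range (r - x)) := fun j hj =>
    card_le_card_of_injOn Fin.val (fun y hy => by simp_all [sunletThreeDist, eq_comm]; omega)
      Fin.val_injective.injOn
  calc #{v | sunletThreeDist (i, x) v ≤ r}
      = ∑ j, #{y : Fin (m + 1) | sunletThreeDist (i, x) (j, y) ≤ r} := by
        simp only [card_filter]; rw [Fintype.sum_prod_type]
    _ = #{y : Fin (m + 1) | sunletThreeDist (i, x) (i, y) ≤ r}
          + ∑ j ∈ {i}ᶜ, #{y : Fin (m + 1) | sunletThreeDist (i, x) (j, y) ≤ r} :=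
        Fintype.sum_eq_add_sum_compl i _
    _ ≤ #(Icc (x - r) (x + r)) + #({i}ᶜ : Finset (Fin 3)) • #(range (r - x)) :=
        add_le_add hown (sum_le_card_nsmul _ _ _ hother)
    _ ≤ 3 * r + if x = 0 then 1 else 0 := by
        simp only [Nat.card_Icc, card_range, card_compl, card_singleton, Fintype.card_fin,
          smul_eq_mul, Fin.ext_iff, Fin.val_zero]
        split_ifs <;> omega

-- A ball centred at a base vertex has one extra vertex, but it contains all three base vertices.
theorem card_sunletThreeDist_ball_compl_le (u : Fin 3 × Fin (m + 1)) {r : ℕ} (hr : 1 ≤ r) :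
    #{v ∈ ({(1, 0), (2, 0)} : Finset _)ᶜ | sunletThreeDist u v ≤ r} ≤ 3 * r := by
  obtain ⟨i, x⟩ := u
  have hball := card_sunletThreeDist_ball_le i x hr
  split_ifs at hball with hx
  · have hsub : ({(1, 0), (2, 0)} : Finset (Fin 3 × Fin (m + 1))) ⊆
        ({v | sunletThreeDist (i, x) v ≤ r} : Finset _) := by
      intro v hv
      simp only [mem_insert, mem_singleton] at hv
      rcases hv with rfl | rfl <;> simp [sunletThreeDist, hx] <;> split_ifs <;> omega
    have hdiff : {v ∈ ({(1, 0), (2, 0)} : Finset (Fin 3 × Fin (m + 1)))ᶜ |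
        sunletThreeDist (i, x) v ≤ r} =
        ({v | sunletThreeDist (i, x) v ≤ r} : Finset _) \ {(1, 0), (2, 0)} := by
      ext v; simp [and_comm]
    rw [hdiff, card_sdiff_of_subset hsub, card_pair (by simp)]
    omega
  · exact (card_le_card (filter_subset_filter _ (subset_univ _))).trans hball

theorem le_sum_of_isDominatingBroadcast_sunletDeg_three {f : Fin 3 × Fin (m + 1) → ℕ}
    (hf : IsDominatingBroadcast (sunletDeg 3 m) f) : m + 1 ≤ ∑ v, f v := by
  let T : Finset (Fin 3 × Fin (m + 1)) := {(1, 0), (2, 0)}ᶜ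
  have hT : #T = 3 * m + 1 := by
    rw [card_compl, card_pair (by simp)]
    simp only [Fintype.card_prod, Fintype.card_fin]
    omega
  have hcover : 3 * m + 1 ≤ 3 * ∑ v, f v :=
    calc 3 * m + 1 = #T := hT.symm
      _ ≤ ∑ u with 1 ≤ f u, #{v ∈ T | (sunletDeg 3 m).dist u v ≤ f u} := hf.card_le_sum T
      _ ≤ ∑ u with 1 ≤ f u, 3 * f u := sum_le_sum fun u hu => by
        simpa only [sunletDeg_three_dist] using
          card_sunletThreeDist_ball_compl_le u (mem_filter.1 hu).2
      _ ≤ ∑ u, 3 * f u := sum_le_sum_of_subset (filter_subset _ _)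
      _ = 3 * ∑ u, f u := (mul_sum _ _ _).symm
  omega

theorem sunletDeg_three_dist_base_le (i : Fin 3) (v : Fin 3 × Fin (m + 1)) :
    (sunletDeg 3 m).dist (i, 0) v ≤ m + 1 := by
  rw [sunletDeg_three_dist, sunletThreeDist]
  split_ifs <;> simp only [Fin.val_zero, Nat.dist] <;> omega

end Sunlet

theorem gammaB_sunletDeg_three_general (m : ℕ) :
    gammaB (Fin 3 × Fin (m + 1)) (sunletDeg 3 m) = m + 1 :=
  gammaB_eq (isDominatingBroadcast_single (by omega) (sunletDeg_three_dist_base_le 0)) (by simp)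
    fun _ => le_sum_of_isDominatingBroadcast_sunletDeg_three

/-- For every natural number `m ≥ 1`, the broadcast domination number of the
sunlet graph with degree `m` on the triangle, `S_3^m`, equals `m + 1`. -/
theorem gammaB_sunletDeg_three (m : ℕ) (hm : 1 ≤ m) :
    gammaB (Fin 3 × Fin (m + 1)) (sunletDeg 3 m) = m + 1 :=
  gammaB_sunletDeg_three_general m
end

section
/- For all natural numbers n ≥ 1 and m ≥ 3, the radius of the sunlet graph with degree n satisfies rad(S_m^n) = ⌊m/2⌋ + n. -/
open SimpleGraph Finset

/-- The eccentricity of a vertex: the maximum distance from `v` to any vertex. -/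
noncomputable def eccentricity {V : Type*} [Fintype V] (G : SimpleGraph V) (v : V) : ℕ :=
  Finset.univ.sup fun u => G.dist u v

/-- The radius of a graph: the minimum eccentricity over all vertices. -/
noncomputable def graphRadius (V : Type*) [Fintype V] (G : SimpleGraph V) : ℕ :=
  sInf {e : ℕ | ∃ v : V, eccentricity G v = e}

/-! The distance in `S_m^n` from `v = (i, j)` to `p = (k, l)` is `|l - j|` when `k = i` and
`d(k, i) + l + j` otherwise, `d` being the distance on the cycle: this formula vanishes at `v`,
changes by at most one along every edge, and drops along some edge at every `p ≠ v`, so it is the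
graph distance. Hence a base vertex has eccentricity `⌊m/2⌋ + n`, while every vertex `(i, j)` lies
at distance `⌊m/2⌋ + n + j` from the leaf of the branch opposite to `i` on the cycle. -/

namespace Fin

variable {m : ℕ}

lemma val_sub_eq_or (a b : Fin m) :
    b.val ≤ a.val ∧ (a - b).val = a.val - b.val ∨
      a.val < b.val ∧ (a - b).val = m + a.val - b.val := by
  rcases le_or_gt b a with h | h
  · exact .inl ⟨h, sub_val_of_le h⟩
  · exact .inr ⟨h, coe_sub_iff_lt.mpr h⟩

def cycleDist (x y : Fin m) : ℕ := min (x - y).val (y - x).val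

lemma cycleDist_eq_zero_iff {x y : Fin m} : cycleDist x y = 0 ↔ x = y := by
  rw [cycleDist, Fin.ext_iff]
  rcases val_sub_eq_or x y with h | h <;> rcases val_sub_eq_or y x with h' | h' <;> omega

@[simp]
lemma cycleDist_self (x : Fin m) : cycleDist x x = 0 :=
  cycleDist_eq_zero_iff.mpr rfl

lemma cycleDist_le_half (x y : Fin m) : cycleDist x y ≤ m / 2 := by
  rw [cycleDist]
  rcases val_sub_eq_or x y with h | h <;> rcases val_sub_eq_or y x with h' | h' <;> omega

lemma exists_cycleDist_eq_half (y : Fin m) : ∃ x, cycleDist x y = m / 2 := by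
  obtain ⟨x, hx⟩ : ∃ x : Fin m, (x : ℕ) = y + m / 2 ∨ (x : ℕ) + m = y + m / 2 := by
    rcases lt_or_ge (y + m / 2) m with h | h
    · exact ⟨⟨y + m / 2, h⟩, .inl rfl⟩
    · exact ⟨⟨y + m / 2 - m, by omega⟩, .inr (by simp only; omega)⟩
  refine ⟨x, ?_⟩
  rw [cycleDist]
  rcases val_sub_eq_or x y with h1 | h1 <;> rcases val_sub_eq_or y x with h2 | h2 <;> omega

lemma cycleDist_le_add_one_of_adj {x y : Fin m} (h : (cycleGraph m).Adj x y) (z : Fin m) :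
    cycleDist x z ≤ cycleDist y z + 1 := by
  rw [cycleGraph_adj'] at h
  simp only [cycleDist]
  rcases val_sub_eq_or x y with h1 | h1 <;> rcases val_sub_eq_or y x with h2 | h2 <;>
    rcases val_sub_eq_or x z with h3 | h3 <;> rcases val_sub_eq_or z x with h4 | h4 <;>
    rcases val_sub_eq_or y z with h5 | h5 <;> rcases val_sub_eq_or z y with h6 | h6 <;> omega

lemma exists_adj_cycleDist_lt {x y : Fin m} (h : x ≠ y) :
    ∃ z, (cycleGraph m).Adj x z ∧ cycleDist z y < cycleDist x y := by
  have hxy : x.val ≠ y.val := Fin.val_ne_of_ne h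
  have := x.isLt
  have := y.isLt
  obtain ⟨pred, hpred⟩ : ∃ z : Fin m, (z : ℕ) + 1 = x ∨ (z : ℕ) + 1 = m ∧ (x : ℕ) = 0 := by
    rcases Nat.eq_zero_or_pos x.val with h0 | hpos
    · exact ⟨⟨m - 1, by omega⟩, .inr ⟨by simp only; omega, h0⟩⟩
    · exact ⟨⟨x - 1, by omega⟩, .inl (by simp only; omega)⟩
  obtain ⟨succ, hsucc⟩ : ∃ z : Fin m, (z : ℕ) = x + 1 ∨ (z : ℕ) = 0 ∧ (x : ℕ) + 1 = m := by
    rcases lt_or_ge (x.val + 1) m with hlt | hge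
    · exact ⟨⟨x + 1, hlt⟩, .inl rfl⟩
    · exact ⟨⟨0, by omega⟩, .inr ⟨rfl, by omega⟩⟩
  simp only [cycleGraph_adj', cycleDist]
  rcases le_or_gt (x - y).val (y - x).val with hdir | hdir
  · refine ⟨pred, ?_⟩
    rcases val_sub_eq_or x y with h1 | h1 <;> rcases val_sub_eq_or y x with h2 | h2 <;>
      rcases val_sub_eq_or x pred with h3 | h3 <;> rcases val_sub_eq_or pred x with h4 | h4 <;>
      rcases val_sub_eq_or pred y with h5 | h5 <;> rcases val_sub_eq_or y pred with h6 | h6 <;>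
      omega
  · refine ⟨succ, ?_⟩
    rcases val_sub_eq_or x y with h1 | h1 <;> rcases val_sub_eq_or y x with h2 | h2 <;>
      rcases val_sub_eq_or x succ with h3 | h3 <;> rcases val_sub_eq_or succ x with h4 | h4 <;>
      rcases val_sub_eq_or succ y with h5 | h5 <;> rcases val_sub_eq_or y succ with h6 | h6 <;>
      omega

end Fin

namespace SimpleGraph

variable {V : Type*} {G : SimpleGraph V} {f : V → ℕ}

lemma Walk.apply_le_length_add (hf : ∀ a b, G.Adj a b → f a ≤ f b + 1) {u v : V}
    (w : G.Walk u v) : f u ≤ w.length + f v := by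
  induction w with
  | nil => simp
  | cons h _ ih =>
    rw [Walk.length_cons]
    have := hf _ _ h
    omega

lemma exists_walk_length_le_of_descent {v : V}
    (hf : ∀ u, u ≠ v → ∃ w, G.Adj u w ∧ f w < f u) (u : V) :
    ∃ p : G.Walk u v, p.length ≤ f u := by
  induction hu : f u using Nat.strong_induction_on generalizing u with
  | _ k ih =>
    by_cases huv : u = v
    · subst huv
      exact ⟨.nil, Nat.zero_le _⟩
    obtain ⟨w, hadj, hlt⟩ := hf u huv
    obtain ⟨p, hp⟩ := ih (f w) (hu ▸ hlt) w rfl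
    exact ⟨.cons hadj p, by rw [Walk.length_cons]; omega⟩

theorem dist_eq_of_lipschitz_of_descent {v : V} (hv : f v = 0)
    (hlip : ∀ a b, G.Adj a b → f a ≤ f b + 1)
    (hdesc : ∀ u, u ≠ v → ∃ w, G.Adj u w ∧ f w < f u) (u : V) : G.dist u v = f u := by
  obtain ⟨p, hp⟩ := exists_walk_length_le_of_descent hdesc u
  obtain ⟨q, hq⟩ := p.reachable.exists_walk_length_eq_dist
  have := q.apply_le_length_add hlip
  have := dist_le p
  omega

end SimpleGraph

section Eccentricity

variable {V : Type*} [Fintype V] {G : SimpleGraph V}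

lemma dist_le_eccentricity (u v : V) : G.dist u v ≤ eccentricity G v :=
  Finset.le_sup (f := fun u => G.dist u v) (mem_univ u)

lemma eccentricity_le_iff {v : V} {r : ℕ} : eccentricity G v ≤ r ↔ ∀ u, G.dist u v ≤ r := by
  simp [eccentricity]

lemma graphRadius_eq_of_le {r : ℕ} (v₀ : V) (h₀ : eccentricity G v₀ ≤ r)
    (h : ∀ v, r ≤ eccentricity G v) : graphRadius V G = r := by
  have hr : eccentricity G v₀ = r := le_antisymm h₀ (h v₀)
  refine le_antisymm (Nat.sInf_le ⟨v₀, hr⟩) (le_csInf ⟨r, v₀, hr⟩ ?_)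
  rintro _ ⟨v, rfl⟩
  exact h v

end Eccentricity

section Sunlet

variable {m n : ℕ}

lemma sunletDeg_adj_iff {p q : Fin m × Fin (n + 1)} :
    (sunletDeg m n).Adj p q ↔
      (p.2 = 0 ∧ q.2 = 0 ∧ (cycleGraph m).Adj p.1 q.1) ∨
        (p.1 = q.1 ∧ ((p.2 : ℕ) + 1 = q.2 ∨ (q.2 : ℕ) + 1 = p.2)) := by
  rw [sunletDeg, fromRel_adj]
  constructor
  · rintro ⟨-, (h | h) | (⟨h1, h2, h3⟩ | ⟨h1, h2⟩)⟩
    · exact .inl h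
    · exact .inr ⟨h.1, .inl h.2⟩
    · exact .inl ⟨h2, h1, h3.symm⟩
    · exact .inr ⟨h1.symm, .inr h2⟩
  · rintro (⟨h1, h2, h3⟩ | ⟨h1, h2 | h2⟩)
    · exact ⟨fun h => h3.ne (congrArg Prod.fst h), .inl (.inl ⟨h1, h2, h3⟩)⟩
    · exact ⟨fun h => by rw [h] at h2; omega, .inl (.inr ⟨h1, h2⟩)⟩
    · exact ⟨fun h => by rw [h] at h2; omega, .inr (.inr ⟨h1.symm, h2⟩)⟩

def sunletDist (v p : Fin m × Fin (n + 1)) : ℕ :=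
  if p.1 = v.1 then Nat.dist p.2 v.2 else Fin.cycleDist p.1 v.1 + p.2 + v.2

lemma sunletDist_le_add_one_of_adj (v : Fin m × Fin (n + 1)) {p q : Fin m × Fin (n + 1)}
    (h : (sunletDeg m n).Adj p q) : sunletDist v p ≤ sunletDist v q + 1 := by
  obtain ⟨k, a⟩ := p
  obtain ⟨l, b⟩ := q
  rcases sunletDeg_adj_iff.mp h with ⟨ha, hb, hkl⟩ | ⟨hkl, hab⟩
  · dsimp only at ha hb hkl
    subst ha hb
    have hcycle := Fin.cycleDist_le_add_one_of_adj hkl v.1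
    simp only [sunletDist, Nat.dist, Fin.val_zero]
    split_ifs with hk hl hl
    · exact absurd (hk.trans hl.symm) hkl.ne
    · omega
    · rw [hl, Fin.cycleDist_self] at hcycle
      omega
    · omega
  · dsimp only at hkl hab
    subst hkl
    simp only [sunletDist, Nat.dist]
    split_ifs <;> omega

lemma exists_adj_sunletDist_lt {v p : Fin m × Fin (n + 1)} (h : p ≠ v) :
    ∃ q, (sunletDeg m n).Adj p q ∧ sunletDist v q < sunletDist v p := by
  obtain ⟨k, a⟩ := p
  obtain ⟨i, j⟩ := v
  have ha := a.isLt
  by_cases hki : k = i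
  · subst hki
    have haj : (a : ℕ) ≠ j := fun h' => h (by rw [Fin.ext h'])
    rcases lt_or_gt_of_ne haj with hlt | hgt
    · refine ⟨(k, ⟨a + 1, by omega⟩), sunletDeg_adj_iff.mpr (.inr ⟨rfl, .inl rfl⟩), ?_⟩
      simp only [sunletDist, if_true, Nat.dist]
      omega
    · refine ⟨(k, ⟨a - 1, by omega⟩), sunletDeg_adj_iff.mpr (.inr ⟨rfl, .inr ?_⟩), ?_⟩
      · simp only
        omega
      · simp only [sunletDist, if_true, Nat.dist]
        omega
  by_cases ha0 : a = 0
  · subst ha0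
    obtain ⟨z, hadj, hlt⟩ := Fin.exists_adj_cycleDist_lt hki
    refine ⟨(z, 0), sunletDeg_adj_iff.mpr (.inl ⟨rfl, rfl, hadj⟩), ?_⟩
    have hpos : 0 < Fin.cycleDist k i :=
      Nat.pos_of_ne_zero (Fin.cycleDist_eq_zero_iff.not.mpr hki)
    simp only [sunletDist, hki, if_false]
    split_ifs <;> simp only [Fin.val_zero, Nat.dist] <;> omega
  · have ha_ne : (a : ℕ) ≠ 0 := Fin.val_ne_of_ne ha0
    refine ⟨(k, ⟨a - 1, by omega⟩), sunletDeg_adj_iff.mpr (.inr ⟨rfl, .inr ?_⟩), ?_⟩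
    · simp only
      omega
    · simp only [sunletDist, hki, if_false]
      omega

theorem sunletDeg_dist (p v : Fin m × Fin (n + 1)) : (sunletDeg m n).dist p v = sunletDist v p :=
  SimpleGraph.dist_eq_of_lipschitz_of_descent (by simp [sunletDist])
    (fun _ _ => sunletDist_le_add_one_of_adj v) (fun _ => exists_adj_sunletDist_lt) p

lemma eccentricity_sunletDeg_base_le (i : Fin m) :
    eccentricity (sunletDeg m n) (i, 0) ≤ m / 2 + n := by
  refine eccentricity_le_iff.mpr fun ⟨k, l⟩ => ?_
  have := Fin.cycleDist_le_half k i
  rw [sunletDeg_dist, sunletDist]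
  split_ifs <;> simp only [Fin.val_zero, Nat.dist] <;> omega

lemma le_eccentricity_sunletDeg (hm : 2 ≤ m) (v : Fin m × Fin (n + 1)) :
    m / 2 + n ≤ eccentricity (sunletDeg m n) v := by
  obtain ⟨x, hx⟩ := Fin.exists_cycleDist_eq_half v.1
  have hxv : x ≠ v.1 := fun h => by
    rw [h, Fin.cycleDist_self] at hx
    omega
  calc m / 2 + n ≤ sunletDist v (x, Fin.last n) := by simp [sunletDist, hxv, hx]
    _ = (sunletDeg m n).dist (x, Fin.last n) v := (sunletDeg_dist _ _).symm
    _ ≤ eccentricity (sunletDeg m n) v := dist_le_eccentricity _ _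

end Sunlet

theorem radius_sunletDeg_general (m n : ℕ) (hm : 3 ≤ m) :
    graphRadius (Fin m × Fin (n + 1)) (sunletDeg m n) = m / 2 + n :=
  graphRadius_eq_of_le (⟨0, by omega⟩, 0) (eccentricity_sunletDeg_base_le _)
    (le_eccentricity_sunletDeg (by omega))

/-- For all natural numbers `n ≥ 1` and `m ≥ 3`, the radius of the sunlet graph
with degree `n` satisfies `rad(S_m^n) = ⌊m/2⌋ + n`. -/
theorem radius_sunletDeg (m n : ℕ) (hm : 3 ≤ m) (hn : 1 ≤ n) :
    graphRadius (Fin m × Fin (n + 1)) (sunletDeg m n) = m / 2 + n :=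
  radius_sunletDeg_general m n hm
end

section
/- For every natural number n ≥ 1, the broadcast domination number of the path graph P_n equals ⌈n/3⌉. -/
open SimpleGraph Finset

lemma pathWalk_bounds {n : ℕ} {u v : Fin n} (p : (SimpleGraph.pathGraph n).Walk u v) :
    u.val ≤ v.val + p.length ∧ v.val ≤ u.val + p.length := by
  induction p with
  | nil => simp
  | cons h p ih =>
    rw [SimpleGraph.pathGraph_adj] at h
    obtain ⟨h1, h2⟩ := ih
    simp only [SimpleGraph.Walk.length_cons]
    omega

lemma pathGraph_dist_bounds {n : ℕ} (u v : Fin n) :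
    u.val ≤ v.val + (SimpleGraph.pathGraph n).dist u v ∧
      v.val ≤ u.val + (SimpleGraph.pathGraph n).dist u v := by
  obtain ⟨p, hp⟩ := (SimpleGraph.pathGraph_preconnected n u v).exists_walk_length_eq_dist
  have := pathWalk_bounds p
  omega

lemma pathGraph_dist_le {n : ℕ} (k : ℕ) (u v : Fin n) (h : u.val + k = v.val) :
    (SimpleGraph.pathGraph n).dist u v ≤ k := by
  induction k generalizing u with
  | zero =>
    have : u = v := Fin.ext (by omega)
    simp [this]
  | succ k ih =>
    have hlt : u.val + 1 < n := by omega
    set u' : Fin n := ⟨u.val + 1, by omega⟩ with hu'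
    have hadj : (SimpleGraph.pathGraph n).Adj u u' := SimpleGraph.pathGraph_adj.mpr (Or.inl rfl)
    have hnemp : Nonempty (Fin n) := ⟨u⟩
    have hconn : (SimpleGraph.pathGraph n).Connected :=
      ⟨SimpleGraph.pathGraph_preconnected n⟩
    have h1 : (SimpleGraph.pathGraph n).dist u u' = 1 :=
      SimpleGraph.dist_eq_one_iff_adj.mpr hadj
    have h2 : (SimpleGraph.pathGraph n).dist u' v ≤ k := ih u' (by simp [hu']; omega)
    have := hconn.dist_triangle (u := u) (v := u') (w := v)
    omega

lemma ceil_third (n : ℕ) : ⌈(n : ℚ) / 3⌉₊ = (n + 2) / 3 := by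
  have hA : (n : ℚ) / 3 ≤ (((n + 2) / 3 : ℕ) : ℚ) := by
    rw [div_le_iff₀ (by norm_num)]
    have : (n : ℕ) ≤ ((n + 2) / 3) * 3 := by omega
    exact_mod_cast this
  have h1 : (n : ℚ) / 3 ≤ (⌈(n : ℚ) / 3⌉₊ : ℚ) := Nat.le_ceil _
  rw [div_le_iff₀ (by norm_num)] at h1
  have hB : n ≤ ⌈(n : ℚ) / 3⌉₊ * 3 := by exact_mod_cast h1
  have := Nat.ceil_le.mpr hA
  omega

lemma arith_third {n m : ℕ} (h : n ≤ 3 * m) : (n + 2) / 3 ≤ m := by omega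

lemma sum_indicator_mod (n : ℕ) :
    ∑ v ∈ Finset.range n, (if v % 3 = 1 then (1 : ℕ) else 0) = (n + 1) / 3 := by
  induction n with
  | zero => simp
  | succ n ih =>
    rw [Finset.sum_range_succ, ih]
    split_ifs with h <;> omega

/-- For every natural number `n ≥ 1`, the broadcast domination number of the
path graph `P_n` equals `⌈n/3⌉`. -/
theorem gammaB_pathGraph (n : ℕ) (hn : 1 ≤ n) :
    gammaB (Fin n) (SimpleGraph.pathGraph n) = ⌈(n : ℚ) / 3⌉₊ := by
  classical
  rw [ceil_third]
  set G := SimpleGraph.pathGraph n with hG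
  -- the witness broadcast
  set f : Fin n → ℕ := fun v =>
    (if v.val % 3 = 1 then 1 else 0) + (if v.val = n - 1 ∧ n % 3 = 1 then 1 else 0) with hf
  have hdom : IsDominatingBroadcast G f := by
    intro v
    have h3 : v.val % 3 = 0 ∨ v.val % 3 = 1 ∨ v.val % 3 = 2 := by omega
    rcases h3 with h0 | h1 | h2
    · by_cases hv1 : v.val + 1 < n
      · have hge : 1 ≤ f ⟨v.val + 1, hv1⟩ := by simp only [hf]; split_ifs <;> omega
        have hd : G.dist ⟨v.val + 1, hv1⟩ v ≤ 1 := by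
          rw [hG, SimpleGraph.dist_comm]
          exact pathGraph_dist_le 1 v _ rfl
        exact ⟨_, hge, le_trans hd hge⟩
      · have hvn : v.val = n - 1 := by have := v.isLt; omega
        have hn3 : n % 3 = 1 := by have := v.isLt; omega
        have hge : 1 ≤ f v := by simp only [hf]; split_ifs <;> omega
        refine ⟨v, hge, ?_⟩
        rw [hG, SimpleGraph.dist_self]
        omega
    · have hge : 1 ≤ f v := by simp only [hf]; split_ifs <;> omega
      refine ⟨v, hge, ?_⟩
      rw [hG, SimpleGraph.dist_self]
      omega
    · have hv1 : v.val - 1 < n := by have := v.isLt; omega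
      have hge : 1 ≤ f ⟨v.val - 1, hv1⟩ := by simp only [hf]; split_ifs <;> omega
      have hd : G.dist ⟨v.val - 1, hv1⟩ v ≤ 1 := by
        rw [hG]
        exact pathGraph_dist_le 1 _ v (by simp; omega)
      exact ⟨_, hge, le_trans hd hge⟩
  have hsum : ∑ v, f v = (n + 2) / 3 := by
    rw [hf]
    rw [Finset.sum_add_distrib]
    have e1 : ∑ v : Fin n, (if v.val % 3 = 1 then (1:ℕ) else 0) = (n + 1) / 3 := by
      rw [Fin.sum_univ_eq_sum_range (fun i => if i % 3 = 1 then (1:ℕ) else 0)]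
      exact sum_indicator_mod n
    have e2 : ∑ v : Fin n, (if v.val = n - 1 ∧ n % 3 = 1 then (1:ℕ) else 0)
        = if n % 3 = 1 then 1 else 0 := by
      rw [Fin.sum_univ_eq_sum_range (fun i => if i = n - 1 ∧ n % 3 = 1 then (1:ℕ) else 0)]
      have : ∀ v ∈ Finset.range n, (if v = n - 1 ∧ n % 3 = 1 then (1:ℕ) else 0)
          = if v = n - 1 then (if n % 3 = 1 then 1 else 0) else 0 := by
        intro v _; split_ifs <;> tauto
      rw [Finset.sum_congr rfl this, Finset.sum_ite_eq' (Finset.range n) (n - 1)]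
      have hlt : n - 1 < n := by omega
      rw [if_pos (Finset.mem_range.mpr hlt)]
    rw [e1, e2]
    split_ifs with h <;> omega
  have hmem : (n + 2) / 3 ∈ {c : ℕ | ∃ f : Fin n → ℕ, IsDominatingBroadcast G f ∧ ∑ v, f v = c} :=
    ⟨f, hdom, hsum⟩
  -- lower bound for any dominating broadcast
  have hlow : ∀ g : Fin n → ℕ, IsDominatingBroadcast G g → n ≤ 3 * ∑ v, g v := by
    intro g hg
    set B : Fin n → Finset (Fin n) := fun u =>
      Finset.univ.filter (fun v => 1 ≤ g u ∧ u.val ≤ v.val + g u ∧ v.val ≤ u.val + g u) with hB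
    have hsub : (Finset.univ : Finset (Fin n)) ⊆ Finset.univ.biUnion B := by
      intro v _
      obtain ⟨u, hu1, hu2⟩ := hg v
      have hb := pathGraph_dist_bounds u v
      rw [hG] at hu2
      refine Finset.mem_biUnion.mpr ⟨u, Finset.mem_univ u, ?_⟩
      simp [hB]
      omega
    have hcard : ∀ u : Fin n, (B u).card ≤ 3 * g u := by
      intro u
      by_cases hgu : 1 ≤ g u
      · have : (B u).card ≤ (Finset.Icc (u.val - g u) (u.val + g u)).card := by
          apply Finset.card_le_card_of_injOn (fun v => v.val)
          · intro v hv
            simp [hB] at hv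
            simp [Finset.mem_Icc]
            omega
          · intro a _ b _ hab
            exact Fin.ext hab
        rw [Nat.card_Icc] at this
        omega
      · have : B u = ∅ := by
          ext v; simp [hB]; omega
        simp [this]
    calc n = (Finset.univ : Finset (Fin n)).card := by simp
      _ ≤ (Finset.univ.biUnion B).card := Finset.card_le_card hsub
      _ ≤ ∑ u, (B u).card := Finset.card_biUnion_le
      _ ≤ ∑ u, 3 * g u := Finset.sum_le_sum (fun u _ => hcard u)
      _ = 3 * ∑ v, g v := by rw [← Finset.mul_sum]
  apply le_antisymm
  · exact Nat.sInf_le hmem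
  · obtain ⟨g, hgdom, hgsum⟩ := Nat.sInf_mem (⟨_, hmem⟩ : Set.Nonempty _)
    have h2 := hlow g hgdom
    rw [hgsum] at h2
    exact arith_third h2
end

section
/- Every finite connected nonempty simple graph G admits a dominating broadcast that is both efficient and of minimum cost, i.e., there exists an efficient dominating broadcast on G whose cost equals γ_b(G). -/
open SimpleGraph Finset

lemma getVert_dist_left {V : Type*} {G : SimpleGraph V} (hG : G.Connected) {u w : V}
    (p : G.Walk u w) (n : ℕ) : G.dist u (p.getVert n) ≤ n := by
  induction n with
  | zero => simp [p.getVert_zero]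
  | succ n ih =>
    by_cases h : n < p.length
    · have hadj := p.adj_getVert_succ h
      have h1 : G.dist (p.getVert n) (p.getVert (n+1)) = 1 :=
        (SimpleGraph.dist_eq_one_iff_adj).2 hadj
      calc G.dist u (p.getVert (n+1))
          ≤ G.dist u (p.getVert n) + G.dist (p.getVert n) (p.getVert (n+1)) :=
            hG.dist_triangle
        _ ≤ n + 1 := by omega
    · rw [p.getVert_of_length_le (by omega)]
      rw [p.getVert_of_length_le (le_of_not_gt h)] at ih
      omega

lemma getVert_dist_right {V : Type*} {G : SimpleGraph V} (hG : G.Connected) {u w : V}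
    (p : G.Walk u w) (n : ℕ) : G.dist (p.getVert n) w ≤ p.length - n := by
  by_cases hn : p.length ≤ n
  · rw [p.getVert_of_length_le hn, SimpleGraph.dist_self]; exact Nat.zero_le _
  · have key : ∀ k n, p.length - n = k → G.dist (p.getVert n) w ≤ k := by
      intro k
      induction k with
      | zero => intro n h
                rw [p.getVert_of_length_le (by omega), SimpleGraph.dist_self]
      | succ k ih =>
        intro n h
        have hlt : n < p.length := by omega
        have hadj := p.adj_getVert_succ hlt
        have h1 : G.dist (p.getVert n) (p.getVert (n+1)) = 1 :=
          (SimpleGraph.dist_eq_one_iff_adj).2 hadj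
        have := ih (n+1) (by omega)
        calc G.dist (p.getVert n) w
            ≤ G.dist (p.getVert n) (p.getVert (n+1)) + G.dist (p.getVert (n+1)) w :=
              hG.dist_triangle
          _ ≤ k + 1 := by omega
    exact key _ n rfl

lemma exists_mid {V : Type*} {G : SimpleGraph V} (hG : G.Connected) (u w : V) (n : ℕ) :
    ∃ x : V, G.dist u x ≤ n ∧ G.dist x w ≤ G.dist u w - n := by
  obtain ⟨p, hp⟩ := hG.exists_walk_length_eq_dist u w
  exact ⟨p.getVert n, getVert_dist_left hG p n, hp ▸ getVert_dist_right hG p n⟩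

lemma sum_two_erase {V : Type*} [Fintype V] [DecidableEq V] (h : V → ℕ) (a b : V)
    (hab : a ≠ b) :
    ∑ t, h t = h a + h b + ∑ t ∈ (univ.erase a).erase b, h t := by
  rw [← Finset.add_sum_erase univ h (mem_univ a),
      ← Finset.add_sum_erase (univ.erase a) h
        (show b ∈ univ.erase a by simp [hab.symm])]
  ring

lemma sum_three_erase {V : Type*} [Fintype V] [DecidableEq V] (h : V → ℕ) (a b c : V)
    (hab : a ≠ b) (hac : a ≠ c) (hbc : b ≠ c) :
    ∑ t, h t = h a + h b + h c + ∑ t ∈ ((univ.erase a).erase b).erase c, h t := by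
  rw [sum_two_erase h a b hab,
      ← Finset.add_sum_erase ((univ.erase a).erase b) h
        (show c ∈ (univ.erase a).erase b by simp [hbc.symm, hac.symm])]
  ring

open Classical in
/-- The adjusted broadcast: move the power of `w` and `u` onto `x`. -/
noncomputable def adjustg {V : Type*} (f : V → ℕ) (x w u : V) : V → ℕ :=
  fun t => if t = x then max (f t) (f w + f u) else if t = w ∨ t = u then 0 else f t

lemma adjustg_x {V : Type*} (f : V → ℕ) (x w u : V) :
    adjustg f x w u x = max (f x) (f w + f u) := by simp [adjustg]

lemma adjustg_ne {V : Type*} (f : V → ℕ) (x w u t : V)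
    (h1 : t ≠ x) (h2 : t ≠ w) (h3 : t ≠ u) : adjustg f x w u t = f t := by
  simp [adjustg, h1, h2, h3]

lemma adjustg_w {V : Type*} (f : V → ℕ) (x w u : V) (h : w ≠ x) :
    adjustg f x w u w = 0 := by simp [adjustg, h]

lemma adjustg_u {V : Type*} (f : V → ℕ) (x w u : V) (h : u ≠ x) :
    adjustg f x w u u = 0 := by simp [adjustg, h]

/-- Every finite connected nonempty simple graph admits a dominating broadcast
that is both efficient and of minimum cost `γ_b(G)`. -/
theorem exists_efficient_gammaB_broadcast {V : Type*} [Fintype V] [Nonempty V]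
    (G : SimpleGraph V) (hG : G.Connected) :
    ∃ f : V → ℕ, IsDominatingBroadcast G f ∧ IsEfficientBroadcast G f ∧
      ∑ v, f v = gammaB V G := by
  classical
  have hdom1 : IsDominatingBroadcast G (fun _ => 1) := fun v =>
    ⟨v, le_rfl, by simp [SimpleGraph.dist_self]⟩
  have hSne : {c : ℕ | ∃ f : V → ℕ, IsDominatingBroadcast G f ∧ ∑ v, f v = c}.Nonempty :=
    ⟨∑ _v : V, 1, fun _ => 1, hdom1, rfl⟩
  have hγ := Nat.sInf_mem hSne
  obtain ⟨f0, hf0, hf0sum⟩ := hγ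
  have hCne : {k : ℕ | ∃ f : V → ℕ, IsDominatingBroadcast G f ∧ ∑ v, f v = gammaB V G ∧
      (univ.filter fun t => 1 ≤ f t).card = k}.Nonempty := ⟨_, f0, hf0, hf0sum, rfl⟩
  obtain ⟨f, hf, hfsum, hfcard⟩ := Nat.sInf_mem hCne
  have hmin : ∀ g : V → ℕ, IsDominatingBroadcast G g → ∑ v, g v = gammaB V G →
      (univ.filter fun t => 1 ≤ f t).card ≤ (univ.filter fun t => 1 ≤ g t).card := by
    intro g hg hgs
    rw [hfcard]
    exact Nat.sInf_le ⟨g, hg, hgs, rfl⟩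
  clear hfcard hCne hSne hdom1 hf0sum
  clear hf0
  refine ⟨f, hf, ?_, hfsum⟩
  intro v
  obtain ⟨u, hu1, hu2⟩ := hf v
  refine ⟨u, ⟨hu1, hu2⟩, ?_⟩
  rintro w ⟨hw1, hw2⟩
  by_contra hne
  have hwu : w ≠ u := hne
  have hk : G.dist w u ≤ f w + f u := by
    have h1 : G.dist w u ≤ G.dist w v + G.dist v u := hG.dist_triangle
    have h2 : G.dist v u = G.dist u v := SimpleGraph.dist_comm
    omega
  obtain ⟨x, hx1, hx2⟩ := exists_mid hG w u (G.dist w u - f w)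
  have hx1' : G.dist w x ≤ f u := by omega
  have hx2' : G.dist x u ≤ f w := by omega
  have hxy : ∀ y t, G.dist t y ≤ f t → (t = w ∨ t = u) →
      G.dist x y ≤ adjustg f x w u x := by
    intro y t hty ht
    have htri : G.dist x y ≤ G.dist x t + G.dist t y := hG.dist_triangle
    have hcw : G.dist x w = G.dist w x := SimpleGraph.dist_comm
    have hle : f w + f u ≤ adjustg f x w u x := by
      rw [adjustg_x]; exact le_max_right _ _
    rcases ht with rfl | rfl <;> omega
  have hgx1 : 1 ≤ adjustg f x w u x := by
    rw [adjustg_x]; exact le_trans (by omega) (le_max_right _ _)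
  have hgdom : IsDominatingBroadcast G (adjustg f x w u) := by
    intro y
    obtain ⟨t, ht1, ht2⟩ := hf y
    by_cases h2 : t = w ∨ t = u
    · exact ⟨x, hgx1, hxy y t ht2 h2⟩
    by_cases h1 : t = x
    · subst h1
      refine ⟨t, hgx1, ?_⟩
      rw [adjustg_x]
      exact le_trans ht2 (le_max_left _ _)
    · push_neg at h2
      refine ⟨t, ?_, ?_⟩ <;> rw [adjustg_ne f x w u t h1 h2.1 h2.2]
      · exact ht1
      · exact ht2
  have hsumle : ∑ t, adjustg f x w u t ≤ ∑ t, f t := by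
    by_cases hxw : x = w
    · subst hxw
      rw [sum_two_erase (adjustg f x x u) x u hwu, sum_two_erase f x u hwu]
      have hrest : ∑ t ∈ (univ.erase x).erase u, adjustg f x x u t
          = ∑ t ∈ (univ.erase x).erase u, f t := by
        refine Finset.sum_congr rfl fun t ht => ?_
        simp only [mem_erase] at ht
        exact adjustg_ne f x x u t ht.2.1 ht.2.1 ht.1
      rw [hrest, adjustg_x, adjustg_u f x x u (Ne.symm hwu),
          max_eq_right (Nat.le_add_right _ _)]
      omega
    · by_cases hxu : x = u
      · subst hxu
        rw [sum_two_erase (adjustg f x w x) x w (Ne.symm hwu),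
            sum_two_erase f x w (Ne.symm hwu)]
        have hrest : ∑ t ∈ (univ.erase x).erase w, adjustg f x w x t
            = ∑ t ∈ (univ.erase x).erase w, f t := by
          refine Finset.sum_congr rfl fun t ht => ?_
          simp only [mem_erase] at ht
          exact adjustg_ne f x w x t ht.2.1 ht.1 ht.2.1
        rw [hrest, adjustg_x, adjustg_w f x w x hwu,
            max_eq_right (Nat.le_add_left _ _)]
        omega
      · have hwx : w ≠ x := fun h => hxw h.symm
        have hux : u ≠ x := fun h => hxu h.symm
        rw [sum_three_erase (adjustg f x w u) x w u (Ne.symm hwx) (Ne.symm hux) hwu,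
            sum_three_erase f x w u (Ne.symm hwx) (Ne.symm hux) hwu]
        have hrest : ∑ t ∈ ((univ.erase x).erase w).erase u, adjustg f x w u t
            = ∑ t ∈ ((univ.erase x).erase w).erase u, f t := by
          refine Finset.sum_congr rfl fun t ht => ?_
          simp only [mem_erase] at ht
          exact adjustg_ne f x w u t ht.2.2.1 ht.2.1 ht.1
        rw [hrest, adjustg_x, adjustg_w f x w u hwx, adjustg_u f x w u hux]
        have hmax : max (f x) (f w + f u) ≤ f x + (f w + f u) :=
          max_le (Nat.le_add_right _ _) (Nat.le_add_left _ _)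
        omega
  have hgsum : ∑ t, adjustg f x w u t = gammaB V G := by
    have h1 : gammaB V G ≤ ∑ t, adjustg f x w u t := Nat.sInf_le ⟨adjustg f x w u, hgdom, rfl⟩
    exact le_antisymm (hsumle.trans hfsum.le) h1
  have hwS : w ∈ univ.filter fun t => 1 ≤ f t := by simp [hw1]
  have huS : u ∈ (univ.filter fun t => 1 ≤ f t).erase w := by simp [hu1, Ne.symm hwu]
  have hsub : (univ.filter fun t => 1 ≤ adjustg f x w u t) ⊆
      insert x (((univ.filter fun t => 1 ≤ f t).erase w).erase u) := by
    intro t ht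
    simp only [mem_filter, mem_univ, true_and] at ht
    by_cases h1 : t = x
    · subst h1; exact mem_insert_self _ _
    · have h2 : t ≠ w := by
        rintro rfl; rw [adjustg_w f x t u h1] at ht; omega
      have h3 : t ≠ u := by
        rintro rfl; rw [adjustg_u f x w t h1] at ht; omega
      refine mem_insert_of_mem ?_
      simp only [mem_erase, mem_filter, mem_univ, true_and]
      rw [adjustg_ne f x w u t h1 h2 h3] at ht
      exact ⟨h3, h2, ht⟩
  have hc1 : ((univ.filter fun t => 1 ≤ f t).erase w).card
      = (univ.filter fun t => 1 ≤ f t).card - 1 := card_erase_of_mem hwS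
  have hc2 : (((univ.filter fun t => 1 ≤ f t).erase w).erase u).card
      = ((univ.filter fun t => 1 ≤ f t).erase w).card - 1 := card_erase_of_mem huS
  have hpos : 1 ≤ ((univ.filter fun t => 1 ≤ f t).erase w).card := card_pos.2 ⟨u, huS⟩
  have hcardg : (univ.filter fun t => 1 ≤ adjustg f x w u t).card
      < (univ.filter fun t => 1 ≤ f t).card := by
    have h1 := card_le_card hsub
    have h2 := card_insert_le x (((univ.filter fun t => 1 ≤ f t).erase w).erase u)
    omega
  exact absurd hcardg (not_lt.2 (hmin _ hgdom hgsum))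
end
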